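/- Let k ≥ 2 be an integer, let D be a positive non-square discriminant, and let Q = [a,b,c] be an integral binary quadratic form with b² − 4ac = D. Then for all τ = u+iv ∈ ℍ, R_{2−2k}^{2k−2}(Q(·,1)^{k−1})(τ) = ((2k−2)!/v^{2k−2}) · Q(conj(τ),1)^{k−1}, where Q(z,1) = az² + bz + c. -/

import Mathlib

noncomputable section

open Complex Real Finset

/-- The upper half-plane, as a subset of `ℂ`. -/
def UpperHalf : Set ℂ := {z : ℂ | 0 < z.im}

/-- The holomorphic Wirtinger derivative `∂f/∂τ = (1/2)(∂f/∂u − i ∂f/∂v)`. -/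
def wirtinger (f : ℂ → ℂ) (τ : ℂ) : ℂ :=
  (1 / 2) * (fderiv ℝ f τ 1 - Complex.I * fderiv ℝ f τ Complex.I)

/-- The antiholomorphic Wirtinger derivative `∂f/∂τ̄ = (1/2)(∂f/∂u + i ∂f/∂v)`. -/
def wirtingerBar (f : ℂ → ℂ) (τ : ℂ) : ℂ :=
  (1 / 2) * (fderiv ℝ f τ 1 + Complex.I * fderiv ℝ f τ Complex.I)

/-- The Maass raising operator `R_κ(f) = 2i ∂f/∂τ + (κ/v) f`. -/
def raise (κ : ℤ) (f : ℂ → ℂ) (τ : ℂ) : ℂ :=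
  2 * Complex.I * wirtinger f τ + ((κ : ℂ) / (τ.im : ℂ)) * f τ

/-- Iterated Maass raising operator `R_κ^n = R_{κ+2(n−1)} ∘ ⋯ ∘ R_κ`. -/
def raiseIter (κ : ℤ) : ℕ → (ℂ → ℂ) → (ℂ → ℂ)
  | 0, f => f
  | n + 1, f => raise (κ + 2 * (n : ℤ)) (raiseIter κ n f)

/-- The flipping operator `𝔉_{2−2k}(f)(τ) = −(v^{2k−2}/(2k−2)!) conj(R_{2−2k}^{2k−2}(f)(τ))`. -/
def flipOp (k : ℕ) (f : ℂ → ℂ) (τ : ℂ) : ℂ :=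
  -(((τ.im : ℂ) ^ (2 * k - 2)) / ((2 * k - 2).factorial : ℂ)) *
    (starRingEnd ℂ) (raiseIter (2 - 2 * (k : ℤ)) (2 * k - 2) f τ)

/-- The weight `−2k` flipping operator `𝔉_{−2k}(f)(τ) = −(v^{2k}/(2k)!) conj(R_{−2k}^{2k}(f)(τ))`. -/
def flipOpNeg (k : ℕ) (f : ℂ → ℂ) (τ : ℂ) : ℂ :=
  -(((τ.im : ℂ) ^ (2 * k)) / ((2 * k).factorial : ℂ)) *
    (starRingEnd ℂ) (raiseIter (-(2 * (k : ℤ))) (2 * k) f τ)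

/-- The Bol-type operator `𝒟 = (1/(2πi)) ∂/∂τ`. -/
def bol (f : ℂ → ℂ) : ℂ → ℂ := fun τ => (1 / (2 * (π : ℂ) * Complex.I)) * wirtinger f τ

/-- Iterates `𝒟^r` of the Bol-type operator. -/
def bolIter (r : ℕ) (f : ℂ → ℂ) : ℂ → ℂ := bol^[r] f

/-- The shadow operator `ξ_{2−2k}(f)(τ) = 2i v^{2−2k} conj(∂f/∂τ̄(τ))`. -/
def xiOp (k : ℕ) (f : ℂ → ℂ) (τ : ℂ) : ℂ :=
  2 * Complex.I * (τ.im : ℂ) ^ ((2 : ℤ) - 2 * k) * (starRingEnd ℂ) (wirtingerBar f τ)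

/-- Integral binary quadratic forms `[a,b,c]` of discriminant `D`. -/
def QD (D : ℤ) : Type := {q : ℤ × ℤ × ℤ // q.2.1 ^ 2 - 4 * q.1 * q.2.2 = D}

/-- `Q(z,1) = a z² + b z + c`. -/
def qval (q : ℤ × ℤ × ℤ) (z : ℂ) : ℂ :=
  (q.1 : ℂ) * z ^ 2 + (q.2.1 : ℂ) * z + (q.2.2 : ℂ)

/-- `Q_τ = (a(u²+v²) + bu + c)/v`. -/
def qtau (q : ℤ × ℤ × ℤ) (τ : ℂ) : ℝ :=
  ((q.1 : ℝ) * (τ.re ^ 2 + τ.im ^ 2) + (q.2.1 : ℝ) * τ.re + (q.2.2 : ℝ)) / τ.im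

/-- The exceptional set `E_D`, the union of the geodesics `Q_τ = 0`. -/
def ED (D : ℤ) : Set ℂ := {τ : ℂ | ∃ q : QD D, qtau q.1 τ = 0}

/-- The incomplete beta function `β(x;r,s) = ∫₀ˣ t^{r−1}(1−t)^{s−1} dt`. -/
def betaInt (x r s : ℝ) : ℝ := ∫ t in (0 : ℝ)..x, t ^ (r - 1) * (1 - t) ^ (s - 1)

/-- The locally harmonic Maass form `𝓕_{1−k,D}` of Bringmann–Kane–Kohnen. -/
def FBKK (k : ℕ) (D : ℕ) (τ : ℂ) : ℂ :=
  (((D : ℝ) ^ ((1 : ℝ) / 2 - (k : ℝ)) / (2 * ((2 * k - 2).choose (k - 1) : ℝ) * π) : ℝ) : ℂ) *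
    ∑' q : QD (D : ℤ),
      ((Real.sign (qtau q.1 τ) : ℝ) : ℂ) * qval q.1 τ ^ (k - 1) *
        ((betaInt ((D : ℝ) * τ.im ^ 2 / ‖qval q.1 τ‖ ^ 2)
            ((k : ℝ) - 1 / 2) (1 / 2) : ℝ) : ℂ)

/-- The function `𝒢_{−k,D}` of Bringmann–Mono. -/
def GBM (k : ℕ) (D : ℕ) (τ : ℂ) : ℂ :=
  (1 / 2 : ℂ) *
    ∑' q : QD (D : ℤ),
      qval q.1 τ ^ k *
        ((betaInt ((D : ℝ) * τ.im ^ 2 / ‖qval q.1 τ‖ ^ 2)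
            ((k : ℝ) + 1 / 2) (1 / 2) : ℝ) : ℂ)

/-- The rising factorial `(a)_n = a(a+1)⋯(a+n−1)`. -/
def risingFactorial (a : ℤ) (n : ℕ) : ℤ := ∏ i ∈ Finset.range n, (a + (i : ℤ))

/-! Write `v = Im τ`. Since `∂/∂τ` kills antiholomorphic functions and `∂v/∂τ = 1/(2i)`, the
raising operator acts diagonally on functions `h(τ̄) vᵉ` with `h` holomorphic:
`R_κ (h(τ̄) vᵉ) = (κ + e) h(τ̄) vᵉ⁻¹`. Taylor expansion of a polynomial `P` of degree `≤ m` about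
`τ̄` writes `P(τ) = ∑_{j ≤ m} P^{[j]}(τ̄) (2iv)ʲ` (Hasse derivatives `P^{[j]} = P^{(j)}/j!`) as a
sum of such eigenfunctions. Then `R_{-m}^m` multiplies the `j`-th term by the rising factorial
`(j - m)_m`, which vanishes for `1 ≤ j ≤ m` and equals `(-1)ᵐ m!` for `j = 0`; so
`R_{-m}^m P = (-1)ᵐ m! v⁻ᵐ P(τ̄)`, and `m = 2k - 2` is even. -/

open Topology ComplexConjugate Polynomial

open scoped Nat

section RaisingOperator

variable {f g : ℂ → ℂ} {τ : ℂ}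

lemma HasFDerivAt.wirtinger_eq {f' : ℂ →L[ℝ] ℂ} (hf : HasFDerivAt f f' τ) :
    wirtinger f τ = (1 / 2) * (f' 1 - I * f' I) := by
  rw [wirtinger, hf.fderiv]

lemma wirtinger_congr (h : f =ᶠ[𝓝 τ] g) : wirtinger f τ = wirtinger g τ := by
  rw [wirtinger, wirtinger, h.fderiv_eq]

lemma wirtinger_sum {ι : Type*} (s : Finset ι) {F : ι → ℂ → ℂ}
    (hF : ∀ i ∈ s, DifferentiableAt ℝ (F i) τ) :
    wirtinger (fun z => ∑ i ∈ s, F i z) τ = ∑ i ∈ s, wirtinger (F i) τ := by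
  simp only [wirtinger, fderiv_fun_sum hF, FunLike.coe_sum, Finset.sum_apply,
    Finset.mul_sum, ← Finset.sum_sub_distrib]

lemma wirtinger_mul (hf : DifferentiableAt ℝ f τ) (hg : DifferentiableAt ℝ g τ) :
    wirtinger (fun z => f z * g z) τ = wirtinger f τ * g τ + f τ * wirtinger g τ := by
  rw [(hf.hasFDerivAt.fun_mul hg.hasFDerivAt).wirtinger_eq, wirtinger, wirtinger]
  simp only [add_apply, smul_apply, smul_eq_mul]
  ring

lemma wirtinger_comp_conj (hg : DifferentiableAt ℂ g (conj τ)) :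
    wirtinger (fun z => g (conj z)) τ = 0 := by
  rw [HasFDerivAt.wirtinger_eq (f := fun z => g (conj z))
    (hg.hasDerivAt.complexToReal_fderiv.comp τ conjCLE.hasFDerivAt)]
  simp [mul_left_comm I, I_mul_I]

lemma hasFDerivAt_im_zpow (hτ : τ.im ≠ 0) (e : ℤ) :
    HasFDerivAt (fun z : ℂ => (z.im : ℂ) ^ e)
      ((e * (τ.im : ℂ) ^ (e - 1)) • ofRealCLM.comp imCLM) τ :=
  (hasDerivAt_zpow e (τ.im : ℂ) (Or.inl (ofReal_ne_zero.2 hτ))).comp_hasFDerivAt (h₂ := (· ^ e)) τ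
    (ofRealCLM.hasFDerivAt.comp τ imCLM.hasFDerivAt)

lemma wirtinger_im_zpow (hτ : τ.im ≠ 0) (e : ℤ) :
    wirtinger (fun z => (z.im : ℂ) ^ e) τ = -(I / 2) * e * (τ.im : ℂ) ^ (e - 1) := by
  rw [(hasFDerivAt_im_zpow hτ e).wirtinger_eq]
  simp
  ring

lemma raise_congr (κ : ℤ) (h : f =ᶠ[𝓝 τ] g) : raise κ f τ = raise κ g τ := by
  rw [raise, raise, wirtinger_congr h, h.eq_of_nhds]

lemma raise_sum {ι : Type*} (κ : ℤ) (s : Finset ι) {F : ι → ℂ → ℂ}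
    (hF : ∀ i ∈ s, DifferentiableAt ℝ (F i) τ) :
    raise κ (fun z => ∑ i ∈ s, F i z) τ = ∑ i ∈ s, raise κ (F i) τ := by
  simp only [raise, wirtinger_sum s hF, Finset.mul_sum, ← Finset.sum_add_distrib]

lemma differentiableAt_comp_conj (hg : DifferentiableAt ℂ g (conj τ)) :
    DifferentiableAt ℝ (fun z => g (conj z)) τ :=
  (hg.restrictScalars ℝ).comp τ conjCLE.differentiableAt

lemma raise_comp_conj_mul_im_zpow (κ e : ℤ) (hg : DifferentiableAt ℂ g (conj τ))
    (hτ : τ.im ≠ 0) :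
    raise κ (fun z => g (conj z) * (z.im : ℂ) ^ e) τ
      = (κ + e) * (g (conj τ) * (τ.im : ℂ) ^ (e - 1)) := by
  rw [raise,
    wirtinger_mul (differentiableAt_comp_conj hg) (hasFDerivAt_im_zpow hτ e).differentiableAt,
    wirtinger_comp_conj hg, wirtinger_im_zpow hτ, zpow_sub_one₀ (ofReal_ne_zero.2 hτ)]
  linear_combination -(e * g (conj τ) * (τ.im : ℂ) ^ e * (τ.im : ℂ)⁻¹) * I_sq

end RaisingOperator

lemma risingFactorial_succ (a : ℤ) (n : ℕ) :
    risingFactorial a (n + 1) = risingFactorial a n * (a + n) :=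
  Finset.prod_range_succ _ n

lemma risingFactorial_neg_natCast_self (n : ℕ) : risingFactorial (-n) n = (-1) ^ n * n ! := by
  rw [risingFactorial, ← Finset.prod_range_reflect, ← Finset.prod_range_add_one_eq_factorial,
    Nat.cast_prod, show (-1 : ℤ) ^ n = ∏ _i ∈ range n, (-1) by simp, ← Finset.prod_mul_distrib]
  refine Finset.prod_congr rfl fun i hi => ?_
  have := Finset.mem_range.1 hi
  push_cast [Nat.sub_sub, Nat.cast_sub (show 1 + i ≤ n by omega)]
  ring

lemma risingFactorial_eq_zero {a : ℤ} {n : ℕ} (ha : a ≤ 0) (hn : -a < n) :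
    risingFactorial a n = 0 :=
  Finset.prod_eq_zero (i := (-a).toNat) (by simp; omega) (by omega)

lemma raiseIter_sum_comp_conj_mul_im_zpow {ι : Type*} (κ : ℤ) (s : Finset ι) {g : ι → ℂ → ℂ}
    (hg : ∀ i, Differentiable ℂ (g i)) (e : ι → ℤ) (n : ℕ) {τ : ℂ} (hτ : τ.im ≠ 0) :
    raiseIter κ n (fun z => ∑ i ∈ s, g i (conj z) * (z.im : ℂ) ^ e i) τ
      = ∑ i ∈ s, (risingFactorial (κ + e i) n : ℂ) * (g i (conj τ) * (τ.im : ℂ) ^ (e i - n)) := by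
  induction n generalizing τ with
  | zero => simp [raiseIter, risingFactorial]
  | succ n ih =>
    have hU : {z : ℂ | z.im ≠ 0} ∈ 𝓝 τ :=
      (isOpen_ne_fun continuous_im continuous_const).mem_nhds hτ
    have hih : raiseIter κ n (fun z => ∑ i ∈ s, g i (conj z) * (z.im : ℂ) ^ e i) =ᶠ[𝓝 τ]
        fun z => ∑ i ∈ s, (fun w => (risingFactorial (κ + e i) n : ℂ) * g i w) (conj z)
          * (z.im : ℂ) ^ (e i - n) := by
      filter_upwards [hU] with z hz
      simp only [ih hz, mul_assoc]
    rw [raiseIter, raise_congr _ hih, raise_sum (F := fun i z =>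
        (fun w => (risingFactorial (κ + e i) n : ℂ) * g i w) (conj z) * (z.im : ℂ) ^ (e i - n)) _ _
      fun i _ => (differentiableAt_comp_conj ((hg i).const_mul _ _)).mul
        (hasFDerivAt_im_zpow hτ _).differentiableAt]
    refine Finset.sum_congr rfl fun i _ => ?_
    rw [raise_comp_conj_mul_im_zpow _ _ ((hg i).const_mul _ _) hτ, risingFactorial_succ]
    push_cast
    ring_nf

lemma Polynomial.eval_eq_sum_hasseDeriv_conj_mul_im_pow (P : ℂ[X]) {m : ℕ} (hP : P.natDegree ≤ m)
    (z : ℂ) :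
    P.eval z = ∑ i ∈ Finset.range (m + 1),
      (2 * I) ^ i * (P.hasseDeriv i).eval (conj z) * (z.im : ℂ) ^ (i : ℤ) := by
  rw [← P.taylor_eval_sub (conj z),
    eval_eq_sum_range' (n := m + 1) (by rw [natDegree_taylor]; omega), sub_conj]
  refine Finset.sum_congr rfl fun i _ => ?_
  rw [taylor_coeff, zpow_natCast]
  push_cast
  ring

lemma raiseIter_neg_natCast_self_eval (P : ℂ[X]) {m : ℕ} (hP : P.natDegree ≤ m) {τ : ℂ}
    (hτ : τ.im ≠ 0) :
    raiseIter (-m) m (fun z => P.eval z) τ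
      = (-1) ^ m * m ! / (τ.im : ℂ) ^ m * P.eval (conj τ) := by
  rw [funext (P.eval_eq_sum_hasseDeriv_conj_mul_im_pow hP),
    raiseIter_sum_comp_conj_mul_im_zpow (g := fun i w => (2 * I) ^ i * (P.hasseDeriv i).eval w) _ _
      (fun i => (P.hasseDeriv i).differentiable.const_mul _) _ _ hτ,
    Finset.sum_range_succ', Finset.sum_eq_zero fun i hi => by
      rw [risingFactorial_eq_zero (by simp at hi ⊢; omega) (by simp at hi ⊢; omega)]; simp]
  simp [risingFactorial_neg_natCast_self, div_eq_mul_inv]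
  ring

theorem raiseIter_qval_general (k : ℕ) (hk : 2 ≤ k)
    (a b c : ℤ) (τ : ℂ) (hτ : 0 < τ.im) :
    raiseIter (2 - 2 * (k : ℤ)) (2 * k - 2) (fun z => qval (a, b, c) z ^ (k - 1)) τ
      = (((2 * k - 2).factorial : ℂ) / (τ.im : ℂ) ^ (2 * k - 2)) *
          qval (a, b, c) ((starRingEnd ℂ) τ) ^ (k - 1) := by
  set Q : ℂ[X] := C (a : ℂ) * X ^ 2 + C (b : ℂ) * X + C (c : ℂ)
  have hQ (z : ℂ) : qval (a, b, c) z ^ (k - 1) = (Q ^ (k - 1)).eval z := by simp [qval, Q]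
  have hdeg : (Q ^ (k - 1)).natDegree ≤ 2 * k - 2 :=
    natDegree_pow_le.trans ((Nat.mul_le_mul_left _ natDegree_quadratic_le).trans (by omega))
  have hκ : 2 - 2 * (k : ℤ) = -((2 * k - 2 : ℕ) : ℤ) := by omega
  have hm : Even (2 * k - 2) := ⟨k - 1, by omega⟩
  simp only [hQ]
  rw [hκ, raiseIter_neg_natCast_self_eval _ hdeg hτ.ne', hm.neg_one_pow, one_mul]

/-- For a quadratic form `Q = [a,b,c]` of positive non-square discriminant `D`,
`R_{2−2k}^{2k−2}(Q(·,1)^{k−1})(τ) = ((2k−2)!/v^{2k−2}) Q(τ̄,1)^{k−1}` on `ℍ`. -/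
theorem raiseIter_qval (k : ℕ) (hk : 2 ≤ k) (D : ℤ) (hD : 0 < D) (hDns : ¬ IsSquare D)
    (a b c : ℤ) (hdisc : b ^ 2 - 4 * a * c = D) (τ : ℂ) (hτ : 0 < τ.im) :
    raiseIter (2 - 2 * (k : ℤ)) (2 * k - 2) (fun z => qval (a, b, c) z ^ (k - 1)) τ
      = (((2 * k - 2).factorial : ℂ) / (τ.im : ℂ) ^ (2 * k - 2)) *
          qval (a, b, c) ((starRingEnd ℂ) τ) ^ (k - 1) :=
  raiseIter_qval_general k hk a b c τ hτ

end
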